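/- The involution ω on quasi-symmetric functions determined by ω(F_{n,J}) = F_{n,[n−1]∖J} satisfies ω(F^cyc_{n,J}) = F^cyc_{n,[n]∖J} for every J ⊆ [n]. -/

import Mathlib

open Finset

namespace CQSym

/-- The exponent-vector (weight) of a word with letters among the positive
integers: the monomial `x_{w 0} ⋯ x_{w (n-1)}`. -/
noncomputable def wt {n : ℕ} (w : Fin n → ℕ+) : ℕ+ →₀ ℕ := ∑ i, Finsupp.single (w i) 1

/-- The fundamental quasi-symmetric function `F_{n,J}` for `J ⊆ [n-1]`
(1-based positions): the sum of `x_{w 0} ⋯ x_{w (n-1)}` over weakly increasing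
words with a strict ascent at every position of `J`. -/
noncomputable def Fqsym (n : ℕ) (J : Finset ℕ) : MvPowerSeries ℕ+ ℤ :=
  fun d => (Nat.card {w : Fin n → ℕ+ //
    Monotone w ∧ (∀ i : Fin n, (i : ℕ) + 1 ∈ J → w i < w (finRotate n i)) ∧
    wt w = d} : ℤ)

/-- The monomial quasi-symmetric function `M_{n,J}` for `J ⊆ [n-1]`:
the sum over weakly increasing words with a strict ascent exactly at the
positions of `J`. -/
noncomputable def Mqsym (n : ℕ) (J : Finset ℕ) : MvPowerSeries ℕ+ ℤ :=
  fun d => (Nat.card {w : Fin n → ℕ+ //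
    Monotone w ∧
    (∀ i : Fin n, (i : ℕ) + 1 < n → (((i : ℕ) + 1 ∈ J) ↔ w i < w (finRotate n i))) ∧
    wt w = d} : ℤ)

/-- The fundamental cyclic quasi-symmetric function `F^cyc_{n,J}` for
`J ⊆ [n]` (1-based positions): the sum of `x_{w 0} ⋯ x_{w (n-1)}` over pairs
`(w, k)` such that `w` is cyclically weakly increasing from position `k`
and has a (cyclic) strict ascent at every position of `J` except possibly
at the position just before `k`. -/
noncomputable def cFqsym (n : ℕ) (J : Finset ℕ) : MvPowerSeries ℕ+ ℤ :=
  fun d => (Nat.card {p : (Fin n → ℕ+) × Fin n //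
    Monotone (fun i : Fin n => p.1 (p.2 + i)) ∧
    (∀ i : Fin n, (i : ℕ) + 1 ∈ J → i ≠ (finRotate n).symm p.2 →
      p.1 i < p.1 (finRotate n i)) ∧
    wt p.1 = d} : ℤ)

/-- The monomial cyclic quasi-symmetric function `M^cyc_{n,J}` for
`J ⊆ [n]`: the sum of `x_{w 0} ⋯ x_{w (n-1)}` over pairs `(w, k)` such that
`w` is cyclically weakly increasing from position `k`, the position just
before `k` belongs to `J`, and at every other position the (cyclic) strict
ascents of `w` are exactly the positions of `J`. -/
noncomputable def cMqsym (n : ℕ) (J : Finset ℕ) : MvPowerSeries ℕ+ ℤ :=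
  fun d => (Nat.card {p : (Fin n → ℕ+) × Fin n //
    Monotone (fun i : Fin n => p.1 (p.2 + i)) ∧
    (((finRotate n).symm p.2 : Fin n) : ℕ) + 1 ∈ J ∧
    (∀ i : Fin n, i ≠ (finRotate n).symm p.2 →
      (((i : ℕ) + 1 ∈ J) ↔ p.1 i < p.1 (finRotate n i))) ∧
    wt p.1 = d} : ℤ)

/-- The cyclic shift `J - i` of a subset `J ⊆ [n]`, computed modulo `n`,
with representatives `1, …, n`. -/
def cshift (n : ℕ) (J : Finset ℕ) (i : ℕ) : Finset ℕ :=
  J.image fun j => (j + n - i - 1) % n + 1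

/-- The complete homogeneous symmetric function `h_n`: the sum of all
monomials of degree `n`. -/
noncomputable def hqsym (n : ℕ) : MvPowerSeries ℕ+ ℤ :=
  fun d => if d.sum (fun _ e => e) = n then 1 else 0

open scoped Classical in
/-- The elementary symmetric function `e_n`: the sum of all squarefree
monomials of degree `n`. -/
noncomputable def eqsym (n : ℕ) : MvPowerSeries ℕ+ ℤ :=
  fun d => if d.sum (fun _ e => e) = n ∧ ∀ x, d x ≤ 1 then 1 else 0

/-- The Schur function of hook shape `(n-k, 1^k)`, defined via semistandard
tableaux: a weakly increasing first row of length `n-k`, a strictly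
increasing leg of length `k` below its first cell. -/
noncomputable def hookSchur (n k : ℕ) : MvPowerSeries ℕ+ ℤ :=
  fun d => (Nat.card {p : (Fin (n - k) → ℕ+) × (Fin k → ℕ+) //
    Monotone p.1 ∧ StrictMono p.2 ∧
    (∀ (h1 : 0 < n - k) (h2 : 0 < k), p.1 ⟨0, h1⟩ < p.2 ⟨0, h2⟩) ∧
    wt p.1 + wt p.2 = d} : ℤ)

/-- The descent number of a word with (distinct) integer letters. -/
def des {N : ℕ} (w : Fin N → ℤ) : ℕ :=
  (Finset.univ.filter fun i : Fin N => (i : ℕ) + 1 < N ∧ w (finRotate N i) < w i).card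

/-- The cyclic descent number of a word with (distinct) integer letters. -/
def cdes {N : ℕ} (w : Fin N → ℤ) : ℕ :=
  (Finset.univ.filter fun i : Fin N => w (finRotate N i) < w i).card

/-- `w` is a shuffle of `u` and `v`. -/
def IsShuffle {m n : ℕ} (u : Fin m → ℤ) (v : Fin n → ℤ) (w : Fin (m + n) → ℤ) : Prop :=
  ∃ (f : Fin m → Fin (m + n)) (g : Fin n → Fin (m + n)),
    StrictMono f ∧ StrictMono g ∧ (∀ i, w (f i) = u i) ∧ (∀ j, w (g j) = v j) ∧
    (∀ x, (∃ i, f i = x) ∨ (∃ j, g j = x))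

/-- The cyclic class `[w]` is a cyclic shuffle of `[u]` and `[v]`: some
cyclic rotation of `w` is a shuffle of cyclic rotations of `u` and `v`. -/
def IsCyclicShuffle {m n : ℕ} (u : Fin m → ℤ) (v : Fin n → ℤ) (w : Fin (m + n) → ℤ) : Prop :=
  ∃ (kw : Fin (m + n)) (ku : Fin m) (kv : Fin n),
    IsShuffle (fun i => u (i + ku)) (fun i => v (i + kv)) (fun i => w (i + kw))

/-- Rotation equivalence of words satisfying a property `P`;  `Quot` of this
relation is the set of cyclic equivalence classes. -/
def RotRel {N : ℕ} (P : (Fin N → ℤ) → Prop) (w₁ w₂ : {w : Fin N → ℤ // P w}) : Prop :=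
  ∃ k : Fin N, ∀ i, w₁.val i = w₂.val (i + k)

/-- Binomial coefficient with integer upper and lower arguments, zero for
negative lower argument. -/
noncomputable def zchoose (a b : ℤ) : ℤ := if 0 ≤ b then Ring.choose a b.toNat else 0

/-- The map `Ψ`, sending a monomial `x_{i₁}^{m₁} ⋯ x_{i_k}^{m_k}`
(`i₁ < … < i_k`) to `q^{i_k}`, extended linearly. -/
noncomputable def psi (f : MvPowerSeries ℕ+ ℤ) : PowerSeries ℤ :=
  PowerSeries.mk fun r =>
    if r = 0 then MvPowerSeries.coeff 0 f
    else ∑ᶠ d ∈ {d : ℕ+ →₀ ℕ |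
        ∃ m ∈ d.support, (∀ m' ∈ d.support, m' ≤ m) ∧ (m : ℕ) = r},
      MvPowerSeries.coeff d f

/-- The product `⊙` on `ℤ[[q]]` determined by `q^i ⊙ q^j = q^{max(i,j)}`. -/
noncomputable def odot (a b : PowerSeries ℤ) : PowerSeries ℤ :=
  PowerSeries.mk fun r =>
    (PowerSeries.coeff r a) * (∑ s ∈ Finset.range (r + 1), PowerSeries.coeff s b) +
    (∑ s ∈ Finset.range r, PowerSeries.coeff s a) * (PowerSeries.coeff r b)

/-- A multivariate power series of bounded (total) degree. -/
def BoundedDeg (f : MvPowerSeries ℕ+ ℤ) : Prop :=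
  ∃ D, ∀ d : ℕ+ →₀ ℕ, D < d.sum (fun _ e => e) → MvPowerSeries.coeff d f = 0

/-- Cellini's cyclic descent set of a permutation (0-based positions). -/
def cDesF {n : ℕ} (w : Fin n → Fin n) : Finset (Fin n) :=
  Finset.univ.filter fun i => w (finRotate n i) < w i

/-- The ordinary descent set of a permutation (0-based positions). -/
def DesF {n : ℕ} (w : Fin n → Fin n) : Finset (Fin n) :=
  Finset.univ.filter fun i => (i : ℕ) + 1 < n ∧ w (finRotate n i) < w i

/-! Split `F^cyc_{n,J}` according to the starting point `k` of the cyclically weakly increasing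
word; rotating the word to start at `k` identifies the `k`-th piece with `F_{n,(J-k) ∩ [n-1]}`.
Complementing `J` in `[n]` complements every `(J-k) ∩ [n-1]` in `[n-1]`, so the claim follows
from the linearity of `ω`. -/

lemma wt_comp_perm {n : ℕ} (w : Fin n → ℕ+) (σ : Equiv.Perm (Fin n)) : wt (w ∘ σ) = wt w :=
  Equiv.sum_comp σ fun i => Finsupp.single (w i) 1

lemma mem_support_wt {n : ℕ} (w : Fin n → ℕ+) (i : Fin n) : w i ∈ (wt w).support := by
  simp only [wt, Finsupp.mem_support_iff, Finsupp.finsetSum_apply, ne_eq,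
    Finset.sum_eq_zero_iff, Finset.mem_univ, true_implies, not_forall]
  exact ⟨i, by simp⟩

lemma finite_of_forall_wt_eq {n : ℕ} (d : ℕ+ →₀ ℕ) {P : (Fin n → ℕ+) → Prop}
    (hP : ∀ w, P w → wt w = d) : Finite {w // P w} :=
  Set.Finite.to_subtype <| (Set.Finite.pi fun _ => d.support.finite_toSet).subset
    fun w hw i _ => hP w hw ▸ mem_support_wt w i

/-- `(J - k) ∩ [n-1]`: it agrees with `cshift n J k ∩ [n-1]` when `J ⊆ [n]`, but written as a
preimage it commutes with complements in `[n]`. -/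
def cshiftIcc (n : ℕ) (J : Finset ℕ) (k : Fin n) : Finset ℕ :=
  (Icc 1 (n - 1)).filter fun m => ((k : ℕ) + m - 1) % n + 1 ∈ J

lemma cshiftIcc_subset (n : ℕ) (J : Finset ℕ) (k : Fin n) :
    cshiftIcc n J k ⊆ Icc 1 (n - 1) :=
  filter_subset _ _

lemma Icc_sdiff_cshiftIcc (n : ℕ) (J : Finset ℕ) (k : Fin n) :
    Icc 1 (n - 1) \ cshiftIcc n J k = cshiftIcc n (Icc 1 n \ J) k := by
  ext m
  have : ((k : ℕ) + m - 1) % n + 1 ∈ Icc 1 n := by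
    simp only [mem_Icc, le_add_iff_nonneg_left, zero_le, true_and, Nat.add_one_le_iff]
    exact Nat.mod_lt _ k.pos
  simp only [cshiftIcc, mem_sdiff, mem_filter]
  tauto

lemma Fin.add_one_ne_zero_iff {n : ℕ} [NeZero n] (j : Fin n) : j + 1 ≠ 0 ↔ (j : ℕ) + 1 < n := by
  rw [ne_eq, Fin.ext_iff, Fin.val_add, Fin.val_one', Nat.add_mod_mod, Fin.val_zero]
  rcases (show (j : ℕ) + 1 ≤ n from j.isLt).lt_or_eq with h | h
  · simp [Nat.mod_eq_of_lt h, h]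
  · rw [h, Nat.mod_self]
    simp

lemma add_one_mem_cshiftIcc_iff {n : ℕ} [NeZero n] (J : Finset ℕ) (k j : Fin n) :
    (j : ℕ) + 1 ∈ cshiftIcc n J k ↔ j + 1 ≠ 0 ∧ ((k + j : Fin n) : ℕ) + 1 ∈ J := by
  rw [Fin.add_one_ne_zero_iff, Fin.val_add, cshiftIcc, mem_filter, mem_Icc, ← add_assoc,
    Nat.add_sub_cancel]
  exact and_congr_left' (by omega)

lemma cyclic_ascents_iff {n : ℕ} [NeZero n] (J : Finset ℕ) (w : Fin n → ℕ+) (k : Fin n) :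
    (∀ i : Fin n, (i : ℕ) + 1 ∈ J → i ≠ (finRotate n).symm k → w i < w (finRotate n i)) ↔
    ∀ j : Fin n, (j : ℕ) + 1 ∈ cshiftIcc n J k → w (k + j) < w (k + finRotate n j) := by
  rw [← (Equiv.addLeft k).forall_congr_right]
  refine forall_congr' fun j => ?_
  simp only [Equiv.coe_addLeft, add_one_mem_cshiftIcc_iff, ne_eq, Equiv.eq_symm_apply,
    finRotate_apply, add_assoc, add_eq_left]
  tauto

def cyclicWordsEquiv (n : ℕ) [NeZero n] (J : Finset ℕ) (d : ℕ+ →₀ ℕ) :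
    {p : (Fin n → ℕ+) × Fin n //
      Monotone (fun i : Fin n => p.1 (p.2 + i)) ∧
      (∀ i : Fin n, (i : ℕ) + 1 ∈ J → i ≠ (finRotate n).symm p.2 →
        p.1 i < p.1 (finRotate n i)) ∧
      wt p.1 = d} ≃
    Σ k : Fin n, {v : Fin n → ℕ+ //
      Monotone v ∧ (∀ i : Fin n, (i : ℕ) + 1 ∈ cshiftIcc n J k → v i < v (finRotate n i)) ∧
      wt v = d} :=
  ((Equiv.prodComm _ _).subtypeEquiv fun _ => Iff.rfl).trans <|
    (Equiv.subtypeProdEquivSigmaSubtype fun k w =>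
      Monotone (fun i : Fin n => w (k + i)) ∧
      (∀ i : Fin n, (i : ℕ) + 1 ∈ J → i ≠ (finRotate n).symm k → w i < w (finRotate n i)) ∧
      wt w = d).trans <| Equiv.sigmaCongrRight fun k =>
      ((Equiv.addLeft k).symm.arrowCongr (Equiv.refl ℕ+)).subtypeEquiv fun w =>
        and_congr Iff.rfl <| and_congr (cyclic_ascents_iff J w k) <| by
          rw [← wt_comp_perm w (Equiv.addLeft k)]
          rfl

lemma cFqsym_eq_sum_Fqsym (n : ℕ) (J : Finset ℕ) :
    cFqsym n J = ∑ k : Fin n, Fqsym n (cshiftIcc n J k) := by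
  ext d
  rw [map_sum]
  change (Nat.card _ : ℤ) = ∑ k, (Nat.card _ : ℤ)
  rcases eq_zero_or_neZero n with rfl | _
  · simp
  have (k : Fin n) : Finite {v : Fin n → ℕ+ // Monotone v ∧
      (∀ i : Fin n, (i : ℕ) + 1 ∈ cshiftIcc n J k → v i < v (finRotate n i)) ∧ wt v = d} :=
    finite_of_forall_wt_eq d fun _ h => h.2.2
  rw [← Nat.cast_sum, ← Nat.card_sigma, Nat.card_congr (cyclicWordsEquiv n J d)]

theorem omega_cFqsym_general (n : ℕ)
    (ω : MvPowerSeries ℕ+ ℤ →ₗ[ℤ] MvPowerSeries ℕ+ ℤ)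
    (hω : ∀ K ⊆ Finset.Icc 1 (n - 1),
      ω (Fqsym n K) = Fqsym n (Finset.Icc 1 (n - 1) \ K))
    (J : Finset ℕ) :
    ω (cFqsym n J) = cFqsym n (Finset.Icc 1 n \ J) := by
  simp only [cFqsym_eq_sum_Fqsym, map_sum, hω _ (cshiftIcc_subset n _ _), Icc_sdiff_cshiftIcc]

/-- The involution `ω`, determined by `ω(F_{n,J}) = F_{n,[n−1]∖J}` and
linearity, satisfies `ω(F^cyc_{n,J}) = F^cyc_{n,[n]∖J}` for every `J ⊆ [n]`. -/
theorem omega_cFqsym (n : ℕ) (hn : 0 < n)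
    (ω : MvPowerSeries ℕ+ ℤ →ₗ[ℤ] MvPowerSeries ℕ+ ℤ)
    (hω : ∀ K ⊆ Finset.Icc 1 (n - 1),
      ω (Fqsym n K) = Fqsym n (Finset.Icc 1 (n - 1) \ K))
    (J : Finset ℕ) (hJ : J ⊆ Finset.Icc 1 n) :
    ω (cFqsym n J) = cFqsym n (Finset.Icc 1 n \ J) :=
  omega_cFqsym_general n ω hω J

end CQSym
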